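/- For any K ⊆ C⁰(ℝ), any φ, any fixed r, p ∈ ℝ and X ∈ L(Ω,F): the map Q ↦ Π_φ(r,X;Q) is concave on P(Ω) (i.e. Π_φ(r,X;λQ¹+(1−λ)Q²) ≥ λΠ_φ(r,X;Q¹)+(1−λ)Π_φ(r,X;Q²) for λ ∈ (0,1)), and the map Q ↦ R_φ(p,X;Q) is quasiconvex on P(Ω) (i.e. R_φ(p,X;λQ¹+(1−λ)Q²) ≤ max{R_φ(p,X;Q¹), R_φ(p,X;Q²)} for λ ∈ (0,1)). -/
import Mathlib


open MeasureTheory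
open scoped ENNReal

/-- Expectation with the convention `E_Q[Z] = E_Q[Z⁺] − E_Q[Z⁻]`, `∞ − ∞ = −∞`
(in `EReal`, `⊤ - ⊤ = ⊥`). -/
noncomputable def eexp {Ω : Type*} [MeasurableSpace Ω] (Q : Measure Ω) (Z : Ω → ℝ) : EReal :=
  (∫⁻ ω, ENNReal.ofReal (Z ω) ∂Q).toEReal - (∫⁻ ω, ENNReal.ofReal (-Z ω) ∂Q).toEReal

/-- `Π_φ(r,X;Q) = inf {E_Q[f(X)] | f ∈ K, φ(f,X) ≥ r}`. -/
noncomputable def Pphi {Ω : Type*} [MeasurableSpace Ω] (K : Set (ℝ → ℝ))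
    (φ : (ℝ → ℝ) → (Ω → ℝ) → EReal) (Q : Measure Ω) (X : Ω → ℝ) (r : ℝ) : EReal :=
  sInf ((fun f => eexp Q (fun ω => f (X ω))) '' {f ∈ K | (r : EReal) ≤ φ f X})

/-- `R_φ(p,X;Q) = sup {s ∈ ℝ | Π_φ(s,X;Q) ≤ p}`. -/
noncomputable def Rphi {Ω : Type*} [MeasurableSpace Ω] (K : Set (ℝ → ℝ))
    (φ : (ℝ → ℝ) → (Ω → ℝ) → EReal) (Q : Measure Ω) (X : Ω → ℝ) (p : ℝ) : EReal :=
  sSup (Real.toEReal '' {s : ℝ | Pphi K φ Q X s ≤ (p : EReal)})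

lemma mul_ereal_sub (l : ℝ) (hl : 0 < l) (A B : ℝ≥0∞) :
    (l:EReal) * ((A:EReal) - (B:EReal)) = (l:EReal)*(A:EReal) - (l:EReal)*(B:EReal) := by
  induction A using ENNReal.recTopCoe with
  | top =>
    induction B using ENNReal.recTopCoe with
    | top =>
      simp only [EReal.coe_ennreal_top, sub_eq_add_neg, EReal.neg_top, EReal.add_bot,
        EReal.coe_mul_bot_of_pos hl, EReal.coe_mul_top_of_pos hl]
    | coe b =>
      simp only [EReal.coe_ennreal_top, EReal.coe_nnreal_eq_coe_real, sub_eq_add_neg,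
        EReal.coe_mul_top_of_pos hl, ← EReal.coe_neg, ← EReal.coe_mul]
      rw [EReal.top_add_coe, EReal.top_add_coe]
      exact EReal.coe_mul_top_of_pos hl
  | coe a =>
    induction B using ENNReal.recTopCoe with
    | top =>
      simp only [EReal.coe_ennreal_top, EReal.coe_nnreal_eq_coe_real, sub_eq_add_neg,
        ← EReal.coe_mul, EReal.coe_mul_bot_of_pos hl, EReal.coe_mul_top_of_pos hl,
        EReal.neg_top, EReal.add_bot]
    | coe b =>
      simp only [EReal.coe_nnreal_eq_coe_real, ← EReal.coe_sub, ← EReal.coe_mul]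
      ring_nf

lemma ereal_add_sub (A B A' B' : ℝ≥0∞) :
    ((A:EReal) + (A':EReal)) - ((B:EReal) + (B':EReal))
      = ((A:EReal) - (B:EReal)) + ((A':EReal) - (B':EReal)) := by
  rw [sub_eq_add_neg, EReal.neg_add (Or.inl (EReal.coe_ennreal_ne_bot B))
    (Or.inr (EReal.coe_ennreal_ne_bot B')), sub_eq_add_neg, sub_eq_add_neg]
  exact add_add_add_comm _ _ _ _

lemma coe_ofReal (l : ℝ) (hl : 0 ≤ l) : ((ENNReal.ofReal l : ℝ≥0∞) : EReal) = (l : EReal) := by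
  rw [EReal.coe_ennreal_ofReal, max_eq_left]
  exact_mod_cast hl

lemma eexp_mix {Ω : Type*} [MeasurableSpace Ω] (l : ℝ) (hl0 : 0 < l) (hl1 : l < 1)
    (Q₁ Q₂ : Measure Ω) (Z : Ω → ℝ) :
    eexp (ENNReal.ofReal l • Q₁ + ENNReal.ofReal (1 - l) • Q₂) Z
      = (l:EReal) * eexp Q₁ Z + ((1 - l : ℝ):EReal) * eexp Q₂ Z := by
  have hl1' : (0:ℝ) < 1 - l := by linarith
  unfold eexp
  simp only [lintegral_add_measure, lintegral_smul_measure, smul_eq_mul,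
    EReal.coe_ennreal_add]
  rw [ereal_add_sub, EReal.coe_ennreal_mul, EReal.coe_ennreal_mul, EReal.coe_ennreal_mul,
    EReal.coe_ennreal_mul, coe_ofReal l hl0.le, coe_ofReal _ hl1'.le,
    ← mul_ereal_sub l hl0, ← mul_ereal_sub _ hl1']

lemma Pphi_concave {Ω : Type*} [MeasurableSpace Ω] (K : Set (ℝ → ℝ))
    (φ : (ℝ → ℝ) → (Ω → ℝ) → EReal) (r : ℝ) (X : Ω → ℝ) (Q₁ Q₂ : Measure Ω)
    (l : ℝ) (hl0 : 0 < l) (hl1 : l < 1) :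
    (l : EReal) * Pphi K φ Q₁ X r + ((1 - l : ℝ) : EReal) * Pphi K φ Q₂ X r ≤
      Pphi K φ (ENNReal.ofReal l • Q₁ + ENNReal.ofReal (1 - l) • Q₂) X r := by
  have hl1' : (0:ℝ) < 1 - l := by linarith
  apply le_sInf
  rintro y ⟨f, hf, rfl⟩
  dsimp only
  rw [eexp_mix l hl0 hl1]
  exact add_le_add
    (mul_le_mul_of_nonneg_left (sInf_le ⟨f, hf, rfl⟩) (by exact_mod_cast hl0.le))
    (mul_le_mul_of_nonneg_left (sInf_le ⟨f, hf, rfl⟩) (by exact_mod_cast hl1'.le))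

theorem stmt11 {Ω : Type*} [m0 : MeasurableSpace Ω] [TopologicalSpace Ω] [PolishSpace Ω]
    (hF : m0 ≤ borel Ω)
    (K : Set (ℝ → ℝ)) (hK : ∀ f ∈ K, Continuous f)
    (φ : (ℝ → ℝ) → (Ω → ℝ) → EReal)
    (r p : ℝ) (X : Ω → ℝ) (hX : Measurable X)
    (Q₁ Q₂ : Measure Ω) (hQ₁ : IsProbabilityMeasure Q₁) (hQ₂ : IsProbabilityMeasure Q₂)
    (l : ℝ) (hl0 : 0 < l) (hl1 : l < 1) :
    -- `Q ↦ Π_φ(r,X;Q)` is concave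
    (l : EReal) * Pphi K φ Q₁ X r + ((1 - l : ℝ) : EReal) * Pphi K φ Q₂ X r ≤
      Pphi K φ (ENNReal.ofReal l • Q₁ + ENNReal.ofReal (1 - l) • Q₂) X r ∧
    -- `Q ↦ R_φ(p,X;Q)` is quasiconvex
    Rphi K φ (ENNReal.ofReal l • Q₁ + ENNReal.ofReal (1 - l) • Q₂) X p ≤
      max (Rphi K φ Q₁ X p) (Rphi K φ Q₂ X p) := by
  have hl1' : (0:ℝ) < 1 - l := by linarith
  refine ⟨Pphi_concave K φ r X Q₁ Q₂ l hl0 hl1, ?_⟩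
  apply sSup_le
  rintro x ⟨s, hs, rfl⟩
  have hcomb : (l : EReal) * Pphi K φ Q₁ X s + ((1 - l : ℝ) : EReal) * Pphi K φ Q₂ X s
      ≤ (p : EReal) := le_trans (Pphi_concave K φ s X Q₁ Q₂ l hl0 hl1) hs
  set a := Pphi K φ Q₁ X s
  set b := Pphi K φ Q₂ X s
  have hmin : min a b ≤ (p : EReal) := by
    refine le_trans ?_ hcomb
    have h1 : min a b = (l : EReal) * min a b + ((1 - l : ℝ) : EReal) * min a b := by
      rw [← EReal.right_distrib_of_nonneg (by exact_mod_cast hl0.le)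
        (by exact_mod_cast hl1'.le), ← EReal.coe_add]
      norm_num
    rw [h1]
    exact add_le_add
      (mul_le_mul_of_nonneg_left (min_le_left a b) (by exact_mod_cast hl0.le))
      (mul_le_mul_of_nonneg_left (min_le_right a b) (by exact_mod_cast hl1'.le))
  rcases min_le_iff.mp hmin with h | h
  · exact le_max_of_le_left (le_sSup ⟨s, h, rfl⟩)
  · exact le_max_of_le_right (le_sSup ⟨s, h, rfl⟩)
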